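/- arXiv:1705.08979 — 5 statements merged into one kernel-verified Lean document; each statement's English description precedes it below -/
import Mathlib

section
/- Every k-automatic sequence (k ≥ 2 an integer) with values in a finite set is weakly periodic. -/
/-
Fix `a`, `b` and a level `L`, and write `a * r + b = k ^ L * c + d` with `d < k ^ L`.
Then `f (a * (k ^ L * n + r) + b) = g (a * n + c)` where `g n = f (k ^ L * n + d)` lies in the
`k`-kernel of `f`, so on the residue class of `r` modulo `k ^ L` the sequence is determined by the
pair `(c, g)`. For `r < k ^ L` there are at most `(a + b + 1) * #kernel` such pairs, which is less
than `k ^ L` once `L` is large, so two distinct residues share their pair.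
-/

open Filter Topology

/-- The `k`-kernel of a sequence: all subsequences `n ↦ f (k^l * n + r)` with `0 ≤ r < k^l`. -/
def kKernel {Ω : Type*} (k : ℕ) (f : ℕ → Ω) : Set (ℕ → Ω) :=
  {g | ∃ l r : ℕ, r < k ^ l ∧ g = fun n => f (k ^ l * n + r)}

/-- A sequence is `k`-automatic if its `k`-kernel is finite. -/
def IsKAutomatic {Ω : Type*} (k : ℕ) (f : ℕ → Ω) : Prop :=
  (kKernel k f).Finite

/-- A sequence `f` is weakly periodic if every restriction `n ↦ f (a n + b)` (with `a ≥ 1`)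
agrees along two distinct residues `r ≠ r'` modulo some `q ≥ 1`. -/
def WeaklyPeriodic {Ω : Type*} (f : ℕ → Ω) : Prop :=
  ∀ a b : ℕ, 0 < a → ∃ q r r' : ℕ, 0 < q ∧ r ≠ r' ∧
    ∀ n : ℕ, f (a * (q * n + r) + b) = f (a * (q * n + r') + b)

/-- A sequence is periodic (with some period `q ≥ 1`). -/
def PeriodicSeq {Ω : Type*} (f : ℕ → Ω) : Prop :=
  ∃ q : ℕ, 0 < q ∧ ∀ n : ℕ, f (n + q) = f n

theorem Nat.mul_mul_add_add_eq_div_add_mod (a b q s n : ℕ) :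
    a * (q * n + s) + b = q * (a * n + (a * s + b) / q) + (a * s + b) % q := by
  conv_lhs => rw [show a * (q * n + s) + b = q * (a * n) + (a * s + b) by ring,
    ← Nat.div_add_mod (a * s + b) q]
  ring

theorem Nat.mul_add_add_div_lt {a b q r : ℕ} (hr : r < q) : (a * r + b) / q < a + b + 1 := by
  rw [Nat.div_lt_iff_lt_mul (by omega)]
  nlinarith

section AffineDecomp

variable {Ω : Type*}

def affineDecomp (f : ℕ → Ω) (a b q r : ℕ) : ℕ × (ℕ → Ω) :=
  ((a * r + b) / q, fun n => f (q * n + (a * r + b) % q))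

theorem apply_eq_affineDecomp (f : ℕ → Ω) (a b q r n : ℕ) :
    f (a * (q * n + r) + b) = (affineDecomp f a b q r).2 (a * n + (affineDecomp f a b q r).1) := by
  rw [affineDecomp, Nat.mul_mul_add_add_eq_div_add_mod]

theorem affineDecomp_mem (k : ℕ) (f : ℕ → Ω) (a b L : ℕ) {r : ℕ} (hr : r < k ^ L) :
    affineDecomp f a b (k ^ L) r ∈ Set.Iio (a + b + 1) ×ˢ kKernel k f :=
  ⟨Nat.mul_add_add_div_lt hr, L, _, Nat.mod_lt _ (by omega), rfl⟩

theorem IsKAutomatic.exists_ne_affineDecomp_eq {k : ℕ} (hk : 2 ≤ k) {f : ℕ → Ω}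
    (hf : IsKAutomatic k f) (a b : ℕ) :
    ∃ L r r', r ≠ r' ∧ affineDecomp f a b (k ^ L) r = affineDecomp f a b (k ^ L) r' := by
  classical
  set L := (a + b + 1) * hf.toFinset.card
  have hcard : (Finset.range (a + b + 1) ×ˢ hf.toFinset).card < (Finset.range (k ^ L)).card := by
    rw [Finset.card_product, Finset.card_range, Finset.card_range]
    exact Nat.lt_pow_self hk
  have hmaps : Set.MapsTo (affineDecomp f a b (k ^ L)) (Finset.range (k ^ L))
      ↑(Finset.range (a + b + 1) ×ˢ hf.toFinset) := by
    intro r hr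
    simpa [Nat.lt_succ_iff, hf.mem_toFinset] using
      affineDecomp_mem k f a b L (Finset.mem_range.mp hr)
  obtain ⟨r, -, r', -, hne, heq⟩ := Finset.exists_ne_map_eq_of_card_lt_of_maps_to hcard hmaps
  exact ⟨L, r, r', hne, heq⟩

end AffineDecomp

theorem stmt_1_general {Ω : Type*} (k : ℕ) (hk : 2 ≤ k) (f : ℕ → Ω)
    (hf : IsKAutomatic k f) : WeaklyPeriodic f := by
  intro a b _
  obtain ⟨L, r, r', hne, heq⟩ := hf.exists_ne_affineDecomp_eq hk a b
  refine ⟨k ^ L, r, r', by positivity, hne, fun n => ?_⟩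
  rw [apply_eq_affineDecomp f, heq, ← apply_eq_affineDecomp f]

/-- Every `k`-automatic sequence (`k ≥ 2`) with values in a finite set is
weakly periodic. -/
theorem stmt_1 {Ω : Type*} [Finite Ω] (k : ℕ) (hk : 2 ≤ k) (f : ℕ → Ω)
    (hf : IsKAutomatic k f) : WeaklyPeriodic f :=
  stmt_1_general k hk f hf
end

section
/- Let X be a nonempty compact metrisable topological space and T : X → X a homeomorphism such that the system (X, T^n) is minimal for every n ≥ 1 (i.e., for every x ∈ X the orbit {T^{nm} x : m ∈ ℤ} is dense in X). Let A ⊆ X be a set which is neither empty nor dense in X and which satisfies closure(A) = closure(interior(A)), and let z ∈ X. Suppose f : ℕ₀ → {0,1} is a sequence such that the set {n ∈ ℕ₀ : f(n) = 1 ↔ T^n z ∈ A} is thick. Then f is not weakly periodic. -/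
open Filter Topology

/-- A set of naturals is thick if it contains arbitrarily long intervals. -/
def Thick (R : Set ℕ) : Prop := ∀ L : ℕ, ∃ a : ℕ, ∀ i < L, a + i ∈ R

/-- A set has upper Banach density zero:
`max_M |Z ∩ [M, M+N)| / N → 0` as `N → ∞`. -/
def BanachDensityZero (Z : Set ℕ) : Prop :=
  ∀ ε : ℝ, 0 < ε → ∃ N₀ : ℕ, ∀ N : ℕ, N₀ ≤ N → ∀ M : ℕ,
    ((Z ∩ Set.Ico M (M + N)).ncard : ℝ) ≤ ε * N

/-- A set has natural density zero. -/
def NaturalDensityZero (E : Set ℕ) : Prop :=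
  Filter.Tendsto (fun N : ℕ => ((E ∩ Set.Iio N).ncard : ℝ) / N) Filter.atTop (nhds 0)

/-!
Weak periodicity at `a = 1`, `b = 0` gives `q`, `r` and `d > 0` with
`f (q n + r) = f (q n + r + d)`. For a minimal homeomorphism `g` of a compact space, compactness
makes the return times of every orbit to a nonempty open set syndetic; in particular a nonempty
closed set with `g C ⊆ C` is everything. Since `closure A = closure (interior A) ≠ X`, this applied
to `T^d` shows that `W = interior A ∩ T^{-d} (closure A)ᶜ` is nonempty, and applied to `T^q` that
every `T^q`-orbit enters `W` within a bounded time `K`. A window of the thick set of length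
`q K + d` starting at a position `≡ r (mod q)` then yields `N ≡ r (mod q)` with `T^N z ∈ A` and
`T^(N+d) z ∉ A`, although `f N = f (N + d)`.
-/

open Set

namespace Homeomorph

variable {X : Type*} [TopologicalSpace X]

def toPerm : (X ≃ₜ X) →* Equiv.Perm X where
  toFun := Homeomorph.toEquiv
  map_one' := rfl
  map_mul' _ _ := rfl

theorem coe_toEquiv_pow (g : X ≃ₜ X) (n : ℕ) : ⇑((g.toEquiv : Equiv.Perm X) ^ n) = ⇑(g ^ n) :=
  congrArg DFunLike.coe (map_pow toPerm g n).symm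

theorem coe_toEquiv_zpow (g : X ≃ₜ X) (m : ℤ) : ⇑((g.toEquiv : Equiv.Perm X) ^ m) = ⇑(g ^ m) :=
  congrArg DFunLike.coe (map_zpow toPerm g m).symm

theorem mapsTo_pow {g : X ≃ₜ X} {s : Set X} (h : MapsTo g s s) (n : ℕ) :
    MapsTo ⇑(g ^ n) s s := by
  induction n with
  | zero => exact mapsTo_id s
  | succ n ih => rw [pow_succ]; exact ih.comp h

variable [CompactSpace X] {g : X ≃ₜ X}

theorem exists_forall_exists_lt_pow_mem (hg : ∀ x, Dense (range fun m : ℤ => (g ^ m) x))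
    {W : Set X} (hWo : IsOpen W) (hWne : W.Nonempty) :
    ∃ K : ℕ, ∀ x, ∃ k < K, (g ^ k) x ∈ W := by
  obtain ⟨s, hs⟩ := isCompact_univ.elim_finite_subcover (fun m : ℤ => ⇑(g ^ m) ⁻¹' W)
    (fun m => hWo.preimage (g ^ m).continuous) fun x _ => by
      obtain ⟨_, hyW, m, rfl⟩ := (hg x).inter_open_nonempty W hWo hWne
      exact mem_iUnion.mpr ⟨m, hyW⟩
  set M := s.sup Int.natAbs
  refine ⟨2 * M + 1, fun x => ?_⟩
  obtain ⟨m, hms, hm⟩ := mem_iUnion₂.mp (hs (mem_univ ((g ^ (M : ℤ)) x)))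
  have hmM : m.natAbs ≤ M := Finset.le_sup (f := Int.natAbs) hms
  refine ⟨(m + M).toNat, by omega, ?_⟩
  have : ((m + M).toNat : ℤ) = m + M := by omega
  rwa [← zpow_natCast, this, zpow_add, mul_apply]

theorem eq_univ_of_mapsTo (hg : ∀ x, Dense (range fun m : ℤ => (g ^ m) x))
    {C : Set X} (hC : IsClosed C) (hCne : C.Nonempty)
    (hgC : MapsTo g C C) : C = univ := by
  by_contra hne
  obtain ⟨K, hK⟩ := exists_forall_exists_lt_pow_mem hg hC.isOpen_compl
    (nonempty_compl.mpr hne)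
  obtain ⟨x, hx⟩ := hCne
  obtain ⟨k, -, hk⟩ := hK x
  exact hk (mapsTo_pow hgC k hx)

theorem exists_mem_interior_apply_notMem_closure
    (hg : ∀ x, Dense (range fun m : ℤ => (g ^ m) x)) {A : Set X} (hA₁ : A.Nonempty)
    (hA₂ : ¬ Dense A) (hA₃ : closure A = closure (interior A)) :
    ∃ x ∈ interior A, g x ∉ closure A := by
  by_contra! h
  have hgA : MapsTo g (closure A) (closure A) := by
    simpa only [closure_closure, ← hA₃] using MapsTo.closure (f := g) h g.continuous
  exact hA₂ (dense_iff_closure_eq.mpr (eq_univ_of_mapsTo hg isClosed_closure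
    hA₁.closure hgA))

end Homeomorph

theorem WeaklyPeriodic.exists_shift_eq {Ω : Type*} {f : ℕ → Ω} (hf : WeaklyPeriodic f) :
    ∃ q r d : ℕ, 0 < q ∧ 0 < d ∧ ∀ n, f (q * n + r) = f (q * n + r + d) := by
  obtain ⟨q, r, r', hq, hrr', h⟩ := hf 1 0 one_pos
  simp only [one_mul, add_zero] at h
  rcases Nat.lt_or_gt_of_ne hrr' with hlt | hlt
  · exact ⟨q, r, r' - r, hq, by omega, fun n => by rw [h n]; congr 1; omega⟩
  · exact ⟨q, r', r - r', hq, by omega, fun n => by rw [← h n]; congr 1; omega⟩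

theorem Thick.exists_mul_add_add_mem {R : Set ℕ} (hR : Thick R) {q : ℕ} (hq : 0 < q)
    (r L : ℕ) : ∃ j, ∀ i < L, q * j + r + i ∈ R := by
  obtain ⟨a, ha⟩ := hR (q + r + L)
  refine ⟨a / q + 1, fun i hi => ?_⟩
  have := Nat.div_add_mod a q
  have := Nat.mod_lt a hq
  convert ha (q * (a / q + 1) + r + i - a) (by rw [mul_add]; omega) using 1
  rw [mul_add]; omega

theorem stmt_4_general {X : Type*} [TopologicalSpace X] [CompactSpace X] (T : X ≃ₜ X)
    (hmin : ∀ n : ℕ, 1 ≤ n → ∀ x : X,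
      Dense (Set.range fun m : ℤ => ((T.toEquiv : Equiv.Perm X) ^ ((n : ℤ) * m)) x))
    (A : Set X) (hA₁ : A.Nonempty) (hA₂ : ¬ Dense A)
    (hA₃ : closure A = closure (interior A)) (z : X) (f : ℕ → Bool)
    (hf : Thick {n : ℕ | f n = true ↔ ((T.toEquiv : Equiv.Perm X) ^ n) z ∈ A}) :
    ¬ WeaklyPeriodic f := by
  intro hWP
  simp only [Homeomorph.coe_toEquiv_pow] at hf
  have hdense : ∀ n : ℕ, 0 < n → ∀ x, Dense (range fun m : ℤ => ((T ^ n) ^ m) x) := by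
    intro n hn x
    simpa only [← zpow_natCast, ← zpow_mul, Homeomorph.coe_toEquiv_zpow] using hmin n hn x
  obtain ⟨q, r, d, hq, hd, hper⟩ := hWP.exists_shift_eq
  set W := interior A ∩ ⇑(T ^ d) ⁻¹' (closure A)ᶜ
  have hWo : IsOpen W :=
    isOpen_interior.inter (isClosed_closure.isOpen_compl.preimage (T ^ d).continuous)
  obtain ⟨x, hxA, hxd⟩ :=
    Homeomorph.exists_mem_interior_apply_notMem_closure (hdense d hd) hA₁ hA₂ hA₃
  obtain ⟨K, hK⟩ := Homeomorph.exists_forall_exists_lt_pow_mem (hdense q hq) hWo ⟨x, hxA, hxd⟩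
  obtain ⟨j, hj⟩ := hf.exists_mul_add_add_mem hq r (q * K + d)
  have hcomp : ∀ a b : ℕ, (T ^ a) ((T ^ b) z) = (T ^ (b + a)) z := fun a b => by
    rw [← Homeomorph.mul_apply, ← pow_add, add_comm]
  obtain ⟨k, hk, hkU, hkV⟩ := hK ((T ^ (q * j + r)) z)
  set N := q * j + r + q * k
  rw [← pow_mul, hcomp] at hkU hkV
  rw [mem_preimage, hcomp] at hkV
  have hqk : q * k + d < q * K + d := by have := Nat.mul_lt_mul_of_pos_left hk hq; omega
  have hfN : f N = true := (hj (q * k) (by omega)).mpr (interior_subset hkU)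
  have hNd := hj (q * k + d) hqk
  rw [← add_assoc] at hNd
  have hfNd : f (N + d) ≠ true := fun h => hkV (subset_closure (hNd.mp h))
  exact hfNd (by rw [← hfN, show N = q * (j + k) + r by ring]; exact (hper (j + k)).symm)

/-- Let `(X, T)` be a totally minimal dynamical system on a nonempty
compact metrisable space, `A ⊆ X` neither empty nor dense with
`closure A = closure (interior A)`, and `z ∈ X`. If `f : ℕ → Bool` is such that
`{n : f n = true ↔ T^n z ∈ A}` is thick, then `f` is not weakly periodic. -/
theorem stmt_4 {X : Type*} [TopologicalSpace X] [CompactSpace X]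
    [TopologicalSpace.MetrizableSpace X] [Nonempty X] (T : X ≃ₜ X)
    (hmin : ∀ n : ℕ, 1 ≤ n → ∀ x : X,
      Dense (Set.range fun m : ℤ => ((T.toEquiv : Equiv.Perm X) ^ ((n : ℤ) * m)) x))
    (A : Set X) (hA₁ : A.Nonempty) (hA₂ : ¬ Dense A)
    (hA₃ : closure A = closure (interior A)) (z : X) (f : ℕ → Bool)
    (hf : Thick {n : ℕ | f n = true ↔ ((T.toEquiv : Equiv.Perm X) ^ n) z ∈ A}) :
    ¬ WeaklyPeriodic f :=
  stmt_4_general T hmin A hA₁ hA₂ hA₃ z f hf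
end

section
/- Let k ≥ 2 and r ≥ 0 be integers and let E ⊆ ℕ₀ be a k-arid set of rank ≤ r. Then there is a constant C such that for all N ≥ 2, max_{M ∈ ℕ₀} |E ∩ [M, M+N)| ≤ C·(log N)^r. -/
open Filter Topology

/-- The `l`-fold concatenation of the word `w` with itself. -/
def wpow {σ : Type*} (w : List σ) (l : ℕ) : List σ := (List.replicate l w).flatten

/-- The integer whose base-`k` expansion (most significant digit first) is the word `u`. -/
def wordVal (k : ℕ) (u : List (Fin k)) : ℕ :=
  u.foldl (fun acc d => acc * k + (d : ℕ)) 0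

/-- A basic `k`-arid set of words of rank `≤ r`:
`{v₀ w₁^{l₁} v₁ w₂^{l₂} ⋯ w_r^{l_r} v_r : l₁, …, l_r ∈ ℕ}`. -/
def IsBasicArid (k r : ℕ) (A : Set (List (Fin k))) : Prop :=
  ∃ (v : Fin (r + 1) → List (Fin k)) (w : Fin r → List (Fin k)),
    A = {u | ∃ l : Fin r → ℕ,
      u = (List.ofFn fun i : Fin r => v i.castSucc ++ wpow (w i) (l i)).flatten
        ++ v (Fin.last r)}

/-- A `k`-arid set of words of rank `≤ r` is a finite union of basic ones. -/
def IsArid (k r : ℕ) (A : Set (List (Fin k))) : Prop :=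
  ∃ (m : ℕ) (B : Fin m → Set (List (Fin k))),
    (∀ i, IsBasicArid k r (B i)) ∧ A = ⋃ i, B i

/-- A set `E ⊆ ℕ` is `k`-arid of rank `≤ r` if it is the set of values of a `k`-arid
set of words of rank `≤ r`. -/
def IsAridNat (k r : ℕ) (E : Set ℕ) : Prop :=
  ∃ A : Set (List (Fin k)), IsArid k r A ∧ E = wordVal k '' A

/-! A basic arid set of rank `r + 1` is the union over `l` of the rank-`r` sets `P · w^l v`.
If `N ≤ k ^ t` and `w ≠ []`, all words with `l ≥ t` share their last `t` digits, so they
contribute at most one value to an interval of length `N`, while the `t` slices with `l < t`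
are handled by induction. Hence an interval of length `N` contains at most `(t + 1) ^ r` values
of the set, and `t = ⌊log₂ N⌋ + 1` is `O(log N)`. -/

open Set

section Words

variable {σ : Type*}

lemma wpow_nil (l : ℕ) : wpow ([] : List σ) l = [] := by
  simp [wpow]

lemma wpow_add (w : List σ) (a b : ℕ) : wpow w (a + b) = wpow w a ++ wpow w b := by
  simp only [wpow, List.replicate_add, List.flatten_append]

lemma length_wpow (w : List σ) (l : ℕ) : (wpow w l).length = l * w.length := by
  simp [wpow, List.sum_replicate]

end Words

section WordVal

variable {k : ℕ}

lemma foldl_digits_eq (b : List ℕ) (init : ℕ) :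
    b.foldl (fun acc d => acc * k + d) init
      = init * k ^ b.length + b.foldl (fun acc d => acc * k + d) 0 := by
  induction b generalizing init with
  | nil => simp
  | cons d b ih =>
    rw [List.foldl_cons, List.foldl_cons, ih, ih (0 * k + d), List.length_cons]
    ring

/-- The coercion `Fin k → ℕ` inside `wordVal` is elaborated as a bind in the list monad. -/
lemma wordVal_eq_foldl_map (u : List (Fin k)) :
    wordVal k u = (u.map Fin.val).foldl (fun acc d => acc * k + d) 0 := by
  simp [wordVal, ← List.map_eq_flatMap]

lemma wordVal_append (a b : List (Fin k)) :
    wordVal k (a ++ b) = wordVal k a * k ^ b.length + wordVal k b := by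
  rw [wordVal_eq_foldl_map, wordVal_eq_foldl_map, wordVal_eq_foldl_map, List.map_append,
    List.foldl_append, foldl_digits_eq, List.length_map]

lemma wordVal_append_modEq {t : ℕ} (a b : List (Fin k)) (hb : t ≤ b.length) :
    wordVal k (a ++ b) ≡ wordVal k b [MOD k ^ t] := by
  have hdvd : k ^ t ∣ wordVal k a * k ^ b.length := Dvd.dvd.mul_left (pow_dvd_pow k hb) _
  simpa [wordVal_append] using (Nat.modEq_zero_iff_dvd.mpr hdvd).add_right (wordVal k b)

lemma wordVal_append_wpow_modEq {t l : ℕ} (p W s : List (Fin k)) (hW : W ≠ []) (hl : t ≤ l) :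
    wordVal k (p ++ (wpow W l ++ s)) ≡ wordVal k (wpow W t ++ s) [MOD k ^ t] := by
  obtain ⟨j, rfl⟩ := Nat.exists_eq_add_of_le' hl
  rw [wpow_add, List.append_assoc, ← List.append_assoc]
  apply wordVal_append_modEq
  rw [List.length_append, length_wpow]
  exact (Nat.le_mul_of_pos_right t (List.length_pos_iff.mpr hW)).trans (Nat.le_add_right _ _)

end WordVal

lemma ncard_modEq_inter_Ico_le_one {q N : ℕ} (hN : N ≤ q) (c M : ℕ) :
    ({x | x ≡ c [MOD q]} ∩ Ico M (M + N)).ncard ≤ 1 := by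
  rw [ncard_le_one ((finite_Ico _ _).subset inter_subset_right)]
  rintro a ⟨hac, ha⟩ b ⟨hbc, hb⟩
  refine (hac.trans hbc.symm).eq_of_abs_lt ?_
  rw [mem_Ico] at ha hb
  rw [abs_sub_lt_iff]
  omega

namespace IsBasicArid

variable {k r : ℕ} {A : Set (List (Fin k))}

lemma eq_singleton (hA : IsBasicArid k 0 A) : ∃ v, A = {v} := by
  obtain ⟨v, w, rfl⟩ := hA
  exact ⟨v 0, by ext u; simp⟩

lemma image_append_right (hA : IsBasicArid k r A) (s : List (Fin k)) :
    IsBasicArid k r ((· ++ s) '' A) := by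
  obtain ⟨v, w, rfl⟩ := hA
  refine ⟨Fin.snoc (fun i => v i.castSucc) (v (Fin.last r) ++ s), w, ?_⟩
  ext u
  simp [Fin.snoc_castSucc, Fin.snoc_last, List.append_assoc, eq_comm]

lemma exists_eq_iUnion_of_succ (hA : IsBasicArid k (r + 1) A) :
    ∃ (P : Set (List (Fin k))) (W s : List (Fin k)), IsBasicArid k r P ∧
      A = ⋃ l, (· ++ (wpow W l ++ s)) '' P := by
  obtain ⟨v, w, rfl⟩ := hA
  refine ⟨_, w (Fin.last r), v (Fin.last (r + 1)),
    ⟨fun i => v i.castSucc, fun i => w i.castSucc, rfl⟩, ?_⟩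
  ext u
  simp only [mem_ofPred_eq, mem_iUnion, mem_image, List.ofFn_succ', List.concat_eq_append,
    List.flatten_append, List.flatten_singleton]
  constructor
  · rintro ⟨l, rfl⟩
    exact ⟨l (Fin.last r), _, ⟨Fin.init l, rfl⟩, by simp [Fin.init]⟩
  · rintro ⟨lr, _, ⟨l, rfl⟩, rfl⟩
    exact ⟨Fin.snoc l lr, by simp [Fin.snoc_castSucc, Fin.snoc_last]⟩

theorem ncard_image_inter_Ico_le {t N : ℕ} (hA : IsBasicArid k r A) (hN : N ≤ k ^ t) (M : ℕ) :
    (wordVal k '' A ∩ Ico M (M + N)).ncard ≤ (t + 1) ^ r := by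
  induction r generalizing A with
  | zero =>
    obtain ⟨v, rfl⟩ := hA.eq_singleton
    rw [image_singleton, pow_zero]
    exact (ncard_le_ncard inter_subset_left (finite_singleton _)).trans (ncard_singleton _).le
  | succ r ih =>
    obtain ⟨P, W, s, hP, rfl⟩ := hA.exists_eq_iUnion_of_succ
    set I := Ico M (M + N)
    set slice : ℕ → Set (List (Fin k)) := fun l => (· ++ (wpow W l ++ s)) '' P
    have hslice (l : ℕ) : (wordVal k '' slice l ∩ I).ncard ≤ (t + 1) ^ r :=
      ih (hP.image_append_right _)
    obtain rfl | hW := eq_or_ne W []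
    · have hconst : ⋃ l, slice l = slice 0 := by simp [slice, wpow_nil, iUnion_const]
      rw [hconst]
      exact (hslice 0).trans (Nat.pow_le_pow_right t.succ_pos r.le_succ)
    have hsub : wordVal k '' (⋃ l, slice l) ∩ I ⊆
        (⋃ l ∈ Finset.range t, wordVal k '' slice l ∩ I) ∪
          ({x | x ≡ wordVal k (wpow W t ++ s) [MOD k ^ t]} ∩ I) := by
      rintro _ ⟨⟨_, ⟨_, ⟨l, rfl⟩, p, hp, rfl⟩, rfl⟩, hx⟩
      obtain hl | hl := lt_or_ge l t
      · exact Or.inl (mem_biUnion (Finset.mem_range.mpr hl) ⟨⟨_, ⟨p, hp, rfl⟩, rfl⟩, hx⟩)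
      · exact Or.inr ⟨wordVal_append_wpow_modEq p W s hW hl, hx⟩
    calc (wordVal k '' (⋃ l, slice l) ∩ I).ncard
        ≤ (⋃ l ∈ Finset.range t, wordVal k '' slice l ∩ I).ncard
          + ({x | x ≡ wordVal k (wpow W t ++ s) [MOD k ^ t]} ∩ I).ncard :=
          (ncard_le_ncard hsub ((finite_Ico M (M + N)).subset
            (union_subset (iUnion₂_subset fun _ _ => inter_subset_right)
              inter_subset_right))).trans (ncard_union_le _ _)
      _ ≤ ∑ l ∈ Finset.range t, (wordVal k '' slice l ∩ I).ncard + 1 :=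
          add_le_add (Finset.set_ncard_biUnion_le _ _) (ncard_modEq_inter_Ico_le_one hN _ M)
      _ ≤ t * (t + 1) ^ r + 1 :=
          Nat.add_le_add_right ((Finset.sum_le_sum fun l _ => hslice l).trans (by simp)) 1
      _ ≤ (t + 1) ^ (r + 1) := by
          have := Nat.one_le_pow r (t + 1) t.succ_pos
          rw [pow_succ]
          nlinarith

end IsBasicArid

lemma natLog_two_add_two_le {N : ℕ} (hN : 2 ≤ N) :
    (Nat.log 2 N + 2 : ℝ) ≤ 3 / Real.log 2 * Real.log N := by
  have hlogb : (Nat.log 2 N : ℝ) ≤ Real.logb 2 N := by exact_mod_cast Real.natLog_le_logb N 2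
  have hone : 1 ≤ Real.logb 2 N := by
    rw [Real.le_logb_iff_rpow_le one_lt_two (by positivity), Real.rpow_one]
    exact_mod_cast hN
  rw [Real.logb] at hlogb hone
  linarith [show 3 / Real.log 2 * Real.log N = 3 * (Real.log N / Real.log 2) by ring]

/-- A `k`-arid set `E ⊆ ℕ` of rank `≤ r` satisfies
`max_M |E ∩ [M, M+N)| ≤ C (log N)^r` for all `N ≥ 2`. -/
theorem stmt_8 (k r : ℕ) (hk : 2 ≤ k) (E : Set ℕ) (hE : IsAridNat k r E) :
    ∃ C : ℝ, ∀ N : ℕ, 2 ≤ N → ∀ M : ℕ,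
      ((E ∩ Set.Ico M (M + N)).ncard : ℝ) ≤ C * (Real.log N) ^ r := by
  obtain ⟨A, ⟨m, B, hB, rfl⟩, rfl⟩ := hE
  refine ⟨m * (3 / Real.log 2) ^ r, fun N hN M => ?_⟩
  set t := Nat.log 2 N + 1
  have hNt : N ≤ k ^ t :=
    (Nat.lt_pow_succ_log_self one_lt_two N).le.trans (Nat.pow_le_pow_left hk t)
  have hcount : ((wordVal k '' ⋃ i, B i) ∩ Ico M (M + N)).ncard ≤ m * (t + 1) ^ r := by
    rw [image_iUnion, iUnion_inter]
    calc _ ≤ ∑ i, (wordVal k '' B i ∩ Ico M (M + N)).ncard := ncard_iUnion_le_of_fintype _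
      _ ≤ ∑ _i : Fin m, (t + 1) ^ r :=
          Finset.sum_le_sum fun i _ => (hB i).ncard_image_inter_Ico_le hNt M
      _ = m * (t + 1) ^ r := by simp
  have ht : ((t + 1 : ℕ) : ℝ) ≤ 3 / Real.log 2 * Real.log N := by
    push_cast [t]
    linarith [natLog_two_add_two_le hN]
  calc (((wordVal k '' ⋃ i, B i) ∩ Ico M (M + N)).ncard : ℝ)
      ≤ m * ((t + 1 : ℕ) : ℝ) ^ r := by exact_mod_cast hcount
    _ ≤ m * (3 / Real.log 2 * Real.log N) ^ r := by gcongr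
    _ = m * (3 / Real.log 2) ^ r * Real.log N ^ r := by rw [mul_pow, mul_assoc]
end

section
/- Let k ≥ 2 be an integer and let E ⊆ ℕ₀ be a k-automatic set. Assume that for every word w ∈ Σ_k^* there exists n ∈ E such that w is a factor of the base-k expansion of n. Then there exist m ∈ ℕ₀ and a sequence (n_i)_{i≥1} of positive integers such that m + s ∈ E for every s ∈ FS(n_i); that is, E − m contains an IP set. -/
open Filter Topology

/-- `E` is an IPS set: it contains a set of shifted finite sums
`FS(n_i; N_t) = {N_t + Σ_{i ∈ α} n_i : t ≥ 1, ∅ ≠ α ⊆ {1, …, t}}`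
for some sequence `(n_i)` of positive integers and shifts `(N_t)`. -/
def IsIPSSet (E : Set ℕ) : Prop :=
  ∃ (n : ℕ → ℕ) (N : ℕ → ℕ), (∀ i, 0 < n i) ∧
    ∀ t : ℕ, 1 ≤ t → ∀ α : Finset ℕ, α.Nonempty → α ⊆ Finset.Icc 1 t →
      N t + ∑ i ∈ α, n i ∈ E

/-- `E ⊆ ℕ` is an IP set: it contains all finite sums of some sequence of positive
integers. -/
def IsIPSet (E : Set ℕ) : Prop :=
  ∃ n : ℕ → ℕ, (∀ i, 0 < n i) ∧ ∀ α : Finset ℕ, α.Nonempty → ∑ i ∈ α, n i ∈ E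

/-- `E ⊆ ℤ` is an IP set: it contains all finite sums of some sequence of positive
integers. -/
def IsIPSetZ (E : Set ℤ) : Prop :=
  ∃ n : ℕ → ℕ, (∀ i, 0 < n i) ∧ ∀ α : Finset ℕ, α.Nonempty → ((∑ i ∈ α, n i : ℕ) : ℤ) ∈ E

namespace IP13

def val (k : ℕ) (w : List ℕ) : ℕ := Nat.ofDigits k w.reverse

def Wop (k : ℕ) (w : List ℕ) (g : ℕ → ℕ) : ℕ → ℕ :=
  fun n => g (k ^ w.length * n + val k w)

def zeros (m : ℕ) : List ℕ := List.replicate m 0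

def repW (w : List ℕ) : ℕ → List ℕ
  | 0 => []
  | m + 1 => w ++ repW w m

def Ok (k : ℕ) (w : List ℕ) : Prop := ∀ d ∈ w, d < k

lemma val_nil (k : ℕ) : val k [] = 0 := by simp [val, Nat.ofDigits]

lemma val_append (k : ℕ) (x y : List ℕ) :
    val k (x ++ y) = val k y + k ^ y.length * val k x := by
  simp [val, List.reverse_append, Nat.ofDigits_append]

lemma val_cons (k : ℕ) (a : ℕ) (t : List ℕ) :
    val k (a :: t) = val k t + k ^ t.length * a := by
  have : (a :: t) = [a] ++ t := rfl
  rw [this, val_append]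
  simp [val, Nat.ofDigits]

lemma val_zeros (k m : ℕ) : val k (zeros m) = 0 := by
  induction m with
  | zero => simp [zeros, val, Nat.ofDigits]
  | succ m ih =>
      have : zeros (m + 1) = 0 :: zeros m := by simp [zeros, List.replicate]
      rw [this, val_cons, ih]
      simp

lemma zeros_length (m : ℕ) : (zeros m).length = m := by simp [zeros]

lemma zeros_append (a b : ℕ) : zeros a ++ zeros b = zeros (a + b) := by
  simp [zeros, ← List.replicate_add]

lemma val_lt (k : ℕ) {w : List ℕ} (hw : Ok k w) :
    val k w < k ^ w.length := by
  induction w with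
  | nil => simp [val_nil]
  | cons a t ih =>
      have ha : a < k := hw a (by simp)
      have ht : Ok k t := fun d hd => hw d (by simp [hd])
      have h1 := ih ht
      rw [val_cons]
      calc val k t + k ^ t.length * a < k ^ t.length + k ^ t.length * a := by
            omega
        _ = k ^ t.length * (a + 1) := by ring
        _ ≤ k ^ t.length * k := by
            exact Nat.mul_le_mul_left _ (by omega)
        _ = k ^ (a :: t).length := by
            simp [List.length_cons, pow_succ]

lemma Wop_nil (k : ℕ) (g : ℕ → ℕ) : Wop k [] g = g := by
  funext n; simp [Wop, val_nil]

lemma Wop_append (k : ℕ) (x y : List ℕ) (g : ℕ → ℕ) :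
    Wop k (x ++ y) g = Wop k x (Wop k y g) := by
  funext n
  simp only [Wop, List.length_append, val_append]
  congr 1
  ring

lemma repW_add (w : List ℕ) (a b : ℕ) : repW w (a + b) = repW w a ++ repW w b := by
  induction a with
  | zero => simp [repW]
  | succ a ih =>
      have : a + 1 + b = (a + b) + 1 := by omega
      rw [this, repW, repW, ih, List.append_assoc]

lemma repW_length (w : List ℕ) (m : ℕ) : (repW w m).length = m * w.length := by
  induction m with
  | zero => simp [repW]
  | succ m ih => rw [repW, List.length_append, ih]; ring

lemma Ok_repW (k : ℕ) {w : List ℕ} (hw : Ok k w) (m : ℕ) : Ok k (repW w m) := by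
  induction m with
  | zero => intro d hd; simp [repW] at hd
  | succ m ih =>
      intro d hd
      rw [repW, List.mem_append] at hd
      rcases hd with h | h
      · exact hw d h
      · exact ih d h

lemma Ok_zeros (k : ℕ) (hk : 0 < k) (m : ℕ) : Ok k (zeros m) := by
  intro d hd
  simp [zeros, List.eq_of_mem_replicate hd] at *
  omega

lemma ok_lift (k : ℕ) {w : List ℕ} (hw : Ok k w) :
    ∃ wf : List (Fin k), wf.map (fun d : Fin k => (d : ℕ)) = w := by
  induction w with
  | nil => exact ⟨[], rfl⟩
  | cons a t ih =>
      obtain ⟨tf, htf⟩ := ih (fun d hd => hw d (by simp [hd]))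
      exact ⟨⟨a, hw a (by simp)⟩ :: tf, by simp [htf]⟩

end IP13

/-- Let `E ⊆ ℕ` be `k`-automatic and suppose every word over `Σ_k`
occurs as a factor of the base-`k` expansion of some element of `E`. Then `E - m`
contains an IP set for some `m ∈ ℕ`. -/
theorem stmt_13 (k : ℕ) (hk : 2 ≤ k) (E : Set ℕ)
    (hE : IsKAutomatic k (E.indicator fun _ => (1 : ℕ)))
    (hocc : ∀ w : List (Fin k), ∃ n ∈ E,
      (w.map (fun d : Fin k => (d : ℕ))) <:+: (Nat.digits k n).reverse) :
    ∃ (m : ℕ) (ni : ℕ → ℕ), (∀ i, 0 < ni i) ∧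
      ∀ α : Finset ℕ, α.Nonempty → m + ∑ i ∈ α, ni i ∈ E := by
  classical
  open IP13 in
  set f : ℕ → ℕ := E.indicator fun _ => (1 : ℕ) with hf
  have hE' : (kKernel k f).Finite := hE
  have h1k : 1 < k := hk
  have h0k : 0 < k := by omega
  set 𝒮 : Finset (ℕ → ℕ) := hE'.toFinset with h𝒮
  have hmem𝒮 : ∀ g, g ∈ 𝒮 ↔ g ∈ kKernel k f := fun g => Set.Finite.mem_toFinset hE'
  have hfS : f ∈ 𝒮 := by
    rw [hmem𝒮]
    exact ⟨0, 0, by norm_num, by funext n; simp⟩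
  -- closure of 𝒮 under Wop
  have hcl : ∀ (w : List ℕ) (g : ℕ → ℕ), Ok k w → g ∈ 𝒮 → Wop k w g ∈ 𝒮 := by
    intro w g hw hg
    rw [hmem𝒮] at hg ⊢
    obtain ⟨l, r, hr, rfl⟩ := hg
    refine ⟨l + w.length, k ^ l * val k w + r, ?_, ?_⟩
    · have hv : val k w + 1 ≤ k ^ w.length := val_lt k hw
      calc k ^ l * val k w + r < k ^ l * val k w + k ^ l := by omega
        _ = k ^ l * (val k w + 1) := by ring
        _ ≤ k ^ l * k ^ w.length := Nat.mul_le_mul_left _ hv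
        _ = k ^ (l + w.length) := by rw [pow_add]
    · funext n
      simp only [Wop]
      congr 1
      ring
  have hAex : ∃ L, 0 < L ∧ ∀ t, 0 < t → ∀ g ∈ 𝒮, Wop k (zeros (t * L)) g = Wop k (zeros L) g := by
    have okz : ∀ m, Ok k (zeros m) := fun m => Ok_zeros k h0k m
    let T := {x // x ∈ 𝒮}
    let Φ : ℕ → (T → T) := fun m x => ⟨Wop k (zeros m) x.1, hcl _ _ (okz m) x.2⟩
    obtain ⟨i, j, hne, heq⟩ := Finite.exists_ne_map_eq_of_infinite Φ
    have hpair : ∃ a b : ℕ, a < b ∧ ∀ g (hg : g ∈ 𝒮), Wop k (zeros a) g = Wop k (zeros b) g := by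
      have hpt : ∀ g (hg : g ∈ 𝒮), Wop k (zeros i) g = Wop k (zeros j) g := by
        intro g hg
        have := congrFun heq ⟨g, hg⟩
        exact congrArg Subtype.val this
      rcases lt_or_gt_of_ne hne with h | h
      · exact ⟨i, j, h, hpt⟩
      · exact ⟨j, i, h, fun g hg => (hpt g hg).symm⟩
    obtain ⟨a, b, hab, hstep⟩ := hpair
    set d := b - a with hd
    have hdpos : 0 < d := by omega
    have hbad : b = a + d := by omega
    have hred : ∀ s g, g ∈ 𝒮 → Wop k (zeros (a + d + s)) g = Wop k (zeros (a + s)) g := by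
      intro s g hg
      have e1 : zeros (a + d + s) = zeros s ++ zeros (a + d) := by
        rw [zeros_append]; congr 1; omega
      have e2 : zeros (a + s) = zeros s ++ zeros a := by
        rw [zeros_append]; congr 1; omega
      rw [e1, e2, Wop_append, Wop_append]
      have h3 : Wop k (zeros (a + d)) g = Wop k (zeros a) g := by
        rw [← hbad]; exact (hstep g hg).symm
      rw [h3]
    have hmod : ∀ u s g, g ∈ 𝒮 → Wop k (zeros (a + s + u * d)) g = Wop k (zeros (a + s)) g := by
      intro u
      induction u with
      | zero => intro s g hg; simp
      | succ u ih =>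
          intro s g hg
          have e : a + s + (u + 1) * d = a + d + (s + u * d) := by
            have : (u + 1) * d = u * d + d := by ring
            omega
          rw [e, hred (s + u * d) g hg]
          have e2 : a + (s + u * d) = a + s + u * d := by omega
          rw [e2, ih s g hg]
    set D := (a + 1) * d with hD
    have hLa : a ≤ D := by
      have : (a + 1) * 1 ≤ (a + 1) * d := Nat.mul_le_mul_left _ hdpos
      omega
    refine ⟨D, by positivity, ?_⟩
    intro t ht g hg
    obtain ⟨t', rfl⟩ : ∃ t', t = t' + 1 := ⟨t - 1, by omega⟩
    have h2 : a + (D - a) = D := by omega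
    have key : (t' + 1) * D = a + (D - a) + (t' * (a + 1)) * d := by
      rw [h2, hD]; ring
    calc Wop k (zeros ((t' + 1) * D)) g
        = Wop k (zeros (a + (D - a) + (t' * (a + 1)) * d)) g := by rw [← key]
      _ = Wop k (zeros (a + (D - a))) g := hmod _ _ g hg
      _ = Wop k (zeros D) g := by rw [h2]

  obtain ⟨L, hLpos, hA⟩ := hAex
  -- minimal rank
  set rk : List ℕ → ℕ := fun w => (𝒮.image (Wop k w)).card with hrk
  have hWcomp : ∀ x w : List ℕ, Wop k (x ++ w) = (Wop k x) ∘ (Wop k w) := by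
    intro x w; funext g; exact Wop_append k x w g
  have hrk_le : ∀ x w : List ℕ, rk (x ++ w) ≤ rk w := by
    intro x w
    have h1 : 𝒮.image (Wop k (x ++ w)) = (𝒮.image (Wop k w)).image (Wop k x) := by
      rw [Finset.image_image, hWcomp x w]
    rw [hrk]
    simp only
    rw [h1]
    exact Finset.card_image_le
  set Rset : Set ℕ := {m | ∃ w, Ok k w ∧ rk w = m} with hRset
  have hRne : Rset.Nonempty := ⟨rk [], [], by intro d hd; simp at hd, rfl⟩
  set ρ := sInf Rset with hρ
  obtain ⟨w₀, hw₀ok, hw₀card⟩ : ∃ w, Ok k w ∧ rk w = ρ := Nat.sInf_mem hRne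
  have hmin : ∀ w, Ok k w → ρ ≤ rk w := fun w hw => Nat.sInf_le ⟨w, hw, rfl⟩
  -- occurrence of X := 1 :: w₀
  set X : List ℕ := 1 :: w₀ with hX
  have hXok : Ok k X := by
    intro d hd
    rcases List.mem_cons.mp hd with h | h
    · omega
    · exact hw₀ok d h
  obtain ⟨Xf, hXf⟩ := ok_lift k hXok
  obtain ⟨n, hnE, hinf⟩ := hocc Xf
  rw [hXf] at hinf
  obtain ⟨p, q, hpq⟩ := hinf
  have hall_ok : Ok k (p ++ X ++ q) := by
    intro d hd
    rw [hpq] at hd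
    exact Nat.digits_lt_base h1k (List.mem_reverse.mp hd)
  have hp_ok : Ok k p := fun d hd => hall_ok d (by simp [hd])
  have hq_ok : Ok k q := fun d hd => hall_ok d (by simp [hd])
  have hn_val : val k (p ++ X ++ q) = n := by
    have h1 : (p ++ X ++ q).reverse = Nat.digits k n := by
      rw [hpq, List.reverse_reverse]
    rw [val, h1, Nat.ofDigits_digits]
  -- the word v₂ and its rank
  obtain ⟨v₂, hv₂⟩ : ∃ v : List ℕ, v = zeros L ++ (p ++ X) := ⟨_, rfl⟩
  have hv₂ok : Ok k v₂ := by
    intro d hd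
    rw [hv₂] at hd
    rcases List.mem_append.mp hd with h | h
    · exact Ok_zeros k h0k L d h
    · rcases List.mem_append.mp h with h' | h'
      · exact hp_ok d h'
      · exact hXok d h'
  have hsplit : v₂ = (zeros L ++ (p ++ [1])) ++ w₀ := by
    rw [hv₂, hX]
    simp [List.append_assoc]
  have hrkv : rk v₂ = ρ :=
    le_antisymm (by rw [hsplit]; calc rk _ ≤ rk w₀ := hrk_le _ _
                                      _ = ρ := hw₀card)
      (hmin _ hv₂ok)
  have hsplit2 : v₂ ++ v₂ = (v₂ ++ (zeros L ++ (p ++ [1]))) ++ w₀ := by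
    simp [hv₂, hX, List.append_assoc]
  have hrkvv : rk (v₂ ++ v₂) = ρ :=
    le_antisymm (by rw [hsplit2]; calc rk _ ≤ rk w₀ := hrk_le _ _
                                       _ = ρ := hw₀card)
      (hmin _ (by intro d hd; rcases List.mem_append.mp hd with h | h <;> exact hv₂ok d h))
  -- the image I and the permutation property
  set I : Finset (ℕ → ℕ) := 𝒮.image (Wop k v₂) with hI
  have hIsub : ∀ x ∈ I, x ∈ 𝒮 := by
    intro x hx
    obtain ⟨g, hg, rfl⟩ := Finset.mem_image.mp hx
    exact hcl _ _ hv₂ok hg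
  have hstab : ∀ x ∈ I, Wop k v₂ x ∈ I := by
    intro x hx
    exact Finset.mem_image_of_mem _ (hIsub x hx)
  have hIcard : I.card = ρ := hrkv
  have hIIcard : (I.image (Wop k v₂)).card = I.card := by
    have h1 : I.image (Wop k v₂) = 𝒮.image (Wop k (v₂ ++ v₂)) := by
      rw [hI, Finset.image_image, ← hWcomp v₂ v₂]
    rw [h1, hIcard]
    exact hrkvv
  have hinjI : Set.InjOn (Wop k v₂) ↑I := Finset.injOn_of_card_image_eq hIIcard
  -- iterates of v₂
  have hstabm : ∀ m, ∀ x ∈ I, Wop k (repW v₂ m) x ∈ I := by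
    intro m
    induction m with
    | zero => intro x hx; rw [repW, Wop_nil]; exact hx
    | succ m ih =>
        intro x hx
        rw [repW, Wop_append]
        exact hstab _ (ih x hx)
  have hinjm : ∀ m, Set.InjOn (Wop k (repW v₂ m)) ↑I := by
    intro m
    induction m with
    | zero => intro x hx y hy h; rw [repW, Wop_nil, Wop_nil] at h; exact h
    | succ m ih =>
        intro x hx y hy h
        rw [repW, Wop_append, Wop_append] at h
        exact ih hx hy (hinjI (Finset.mem_coe.mpr (hstabm m x hx))
          (Finset.mem_coe.mpr (hstabm m y hy)) h)
  -- pigeonhole on iterates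
  have hM₂ex : ∃ M₂, 0 < M₂ ∧ ∀ x ∈ I, Wop k (repW v₂ M₂) x = x := by
    let TI := {x // x ∈ I}
    let Ψ : ℕ → (TI → TI) := fun m x => ⟨Wop k (repW v₂ m) x.1, hstabm m x.1 x.2⟩
    obtain ⟨i, j, hne, heq⟩ := Finite.exists_ne_map_eq_of_infinite Ψ
    have hpt : ∀ x (hx : x ∈ I), Wop k (repW v₂ i) x = Wop k (repW v₂ j) x := by
      intro x hx
      exact congrArg Subtype.val (congrFun heq ⟨x, hx⟩)
    have hcase : ∀ a b : ℕ, a < b →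
        (∀ x (hx : x ∈ I), Wop k (repW v₂ a) x = Wop k (repW v₂ b) x) →
        ∃ M₂, 0 < M₂ ∧ ∀ x ∈ I, Wop k (repW v₂ M₂) x = x := by
      intro a b hab hpt'
      obtain ⟨c, hcpos, rfl⟩ : ∃ c, 0 < c ∧ b = a + c := ⟨b - a, by omega, by omega⟩
      refine ⟨c, hcpos, ?_⟩
      intro x hx
      have h1 : Wop k (repW v₂ (a + c)) x = Wop k (repW v₂ a) (Wop k (repW v₂ c) x) := by
        rw [repW_add, Wop_append]
      have h2 : Wop k (repW v₂ a) (Wop k (repW v₂ c) x) = Wop k (repW v₂ a) x := by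
        rw [← h1]; exact (hpt' x hx).symm
      exact hinjm a (Finset.mem_coe.mpr (hstabm _ x hx)) (Finset.mem_coe.mpr hx) h2
    rcases lt_or_gt_of_ne hne with h | h
    · exact hcase i j h hpt
    · exact hcase j i h (fun x hx => (hpt x hx).symm)
  obtain ⟨M₂, hM₂pos, hM₂⟩ := hM₂ex
  have hidmul : ∀ j, ∀ x ∈ I, Wop k (repW v₂ (j * M₂)) x = x := by
    intro j
    induction j with
    | zero => intro x hx; rw [Nat.zero_mul, repW, Wop_nil]
    | succ j ih =>
        intro x hx
        have : (j + 1) * M₂ = M₂ + j * M₂ := by ring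
        rw [this, repW_add, Wop_append, ih x hx]
        exact hM₂ x hx
  -- the state σ and its properties
  have hφS : Wop k q f ∈ 𝒮 := hcl q f hq_ok hfS
  obtain ⟨σ, hσ⟩ : ∃ s : ℕ → ℕ, s = Wop k v₂ (Wop k q f) := ⟨_, rfl⟩
  have hσI : σ ∈ I := by rw [hσ, hI]; exact Finset.mem_image_of_mem _ hφS
  have hσS : σ ∈ 𝒮 := hIsub σ hσI
  have hokPX : Ok k (p ++ X) := by
    intro d hd
    rcases List.mem_append.mp hd with h | h
    · exact hp_ok d h
    · exact hXok d h
  have hvq_val : val k (v₂ ++ q) = n := by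
    have h1 : v₂ ++ q = zeros L ++ (p ++ X ++ q) := by
      rw [hv₂]; simp [List.append_assoc]
    rw [h1, val_append, val_zeros, mul_zero, add_zero]
    exact hn_val
  have hσ_form : ∀ x, σ x = f (k ^ (v₂.length + q.length) * x + n) := by
    intro x
    rw [hσ, ← Wop_append]
    show f (k ^ (v₂ ++ q).length * x + val k (v₂ ++ q)) = _
    rw [List.length_append, hvq_val]
  have hF1 : σ 0 = 1 := by
    rw [hσ_form 0, mul_zero, zero_add, hf]
    exact Set.indicator_of_mem hnE _
  -- the loop words
  obtain ⟨V, hV⟩ : ∃ v : List ℕ, v = repW v₂ (L * M₂) := ⟨_, rfl⟩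
  have hVlen : V.length = (L * M₂) * v₂.length := by rw [hV, repW_length]
  have hVok : Ok k V := by rw [hV]; exact Ok_repW k hv₂ok _
  obtain ⟨A, hA2⟩ : ∃ a : ℕ, a = (L * M₂) * v₂.length := ⟨_, rfl⟩
  obtain ⟨c, hc⟩ : ∃ c : ℕ, c = val k V := ⟨_, rfl⟩
  have hv₂len_pos : 0 < v₂.length := by
    rw [hv₂, List.length_append, zeros_length]
    omega
  have hApos : 0 < A := by
    rw [hA2]
    exact Nat.mul_pos (Nat.mul_pos hLpos hM₂pos) hv₂len_pos
  have hvalX : 0 < val k X := by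
    rw [hX, val_cons, mul_one]
    have h5 : 0 < k ^ w₀.length := pow_pos h0k _
    omega
  have hvalv₂ : 0 < val k v₂ := by
    rw [hv₂, val_append, val_zeros, mul_zero, add_zero, val_append]
    exact lt_of_lt_of_le hvalX (Nat.le_add_right _ _)
  have hcpos : 0 < c := by
    obtain ⟨s, hs⟩ : ∃ s, L * M₂ = s + 1 :=
      ⟨L * M₂ - 1, by have := Nat.mul_pos hLpos hM₂pos; omega⟩
    rw [hc, hV, hs, repW, val_append]
    have h6 : 0 < k ^ (repW v₂ s).length := pow_pos h0k _
    have h7 : 0 < k ^ (repW v₂ s).length * val k v₂ := Nat.mul_pos h6 hvalv₂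
    omega
  -- loop identities
  have hWVσ : Wop k V σ = σ := by
    rw [hV, hσ]
    exact hidmul L _ (by rw [hI]; exact Finset.mem_image_of_mem _ hφS)
  have hF3 : ∀ x, σ (k ^ A * x + c) = σ x := by
    intro x
    have h2 := congrFun hWVσ x
    have h3 : Wop k V σ x = σ (k ^ A * x + c) := by
      show σ (k ^ V.length * x + val k V) = σ (k ^ A * x + c)
      rw [hVlen, ← hA2, ← hc]
    rw [← h3]
    exact h2
  have hWZσ : Wop k (zeros A) σ = σ := by
    have t1 : A = (M₂ * v₂.length) * L := by rw [hA2]; ring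
    have t2 : 0 < M₂ * v₂.length := Nat.mul_pos hM₂pos hv₂len_pos
    have h1 : Wop k (zeros A) σ = Wop k (zeros L) σ := by
      rw [t1]; exact hA _ t2 σ hσS
    rw [h1]
    have hPXφ : Wop k (p ++ X) (Wop k q f) ∈ 𝒮 := hcl _ _ hokPX hφS
    have e1 : σ = Wop k (zeros L) (Wop k (p ++ X) (Wop k q f)) := by
      rw [hσ, hv₂, Wop_append]
    have e2 : ∀ Y : ℕ → ℕ, Wop k (zeros L) (Wop k (zeros L) Y) = Wop k (zeros (2 * L)) Y := by
      intro Y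
      rw [← Wop_append, zeros_append, two_mul]
    calc Wop k (zeros L) σ
        = Wop k (zeros (2 * L)) (Wop k (p ++ X) (Wop k q f)) := by rw [e1, e2]
      _ = Wop k (zeros L) (Wop k (p ++ X) (Wop k q f)) := hA 2 (by omega) _ hPXφ
      _ = σ := e1.symm
  have hF2 : ∀ x, σ (k ^ A * x) = σ x := by
    intro x
    have h2 := congrFun hWZσ x
    have h3 : Wop k (zeros A) σ x = σ (k ^ A * x) := by
      show σ (k ^ (zeros A).length * x + val k (zeros A)) = σ (k ^ A * x)
      rw [zeros_length, val_zeros, add_zero]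
    rw [← h3]
    exact h2
  -- finite sums of the loop increments
  have hF4 : ∀ t (α : Finset ℕ), (∀ i ∈ α, i < t) →
      σ (∑ i ∈ α, c * k ^ (i * A)) = σ 0 := by
    intro t
    induction t with
    | zero =>
        intro α hα
        have : α = ∅ := Finset.eq_empty_of_forall_notMem (fun i hi => by
          have := hα i hi; omega)
        rw [this]; simp
    | succ t ih =>
        intro α hα
        set β := α.erase 0 with hβ
        set γ := β.image (· - 1) with hγ
        have hinj : ∀ x ∈ β, ∀ y ∈ β, x - 1 = y - 1 → x = y := by
          intro x hx y hy hxy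
          have hx0 : x ≠ 0 := Finset.ne_of_mem_erase hx
          have hy0 : y ≠ 0 := Finset.ne_of_mem_erase hy
          omega
        have h1 : ∑ j ∈ γ, c * k ^ (j * A) = ∑ i ∈ β, c * k ^ ((i - 1) * A) :=
          Finset.sum_image hinj
        have h2 : ∑ i ∈ β, c * k ^ (i * A) = k ^ A * ∑ j ∈ γ, c * k ^ (j * A) := by
          rw [h1, Finset.mul_sum]
          refine Finset.sum_congr rfl fun i hi => ?_
          have hi0 : i ≠ 0 := Finset.ne_of_mem_erase hi
          have he : i * A = (i - 1) * A + A := by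
            obtain ⟨i', rfl⟩ : ∃ i', i = i' + 1 := ⟨i - 1, by omega⟩
            simp [Nat.add_mul]
          rw [he, pow_add]; ring
        have hγb : ∀ j ∈ γ, j < t := by
          intro j hj
          obtain ⟨i, hi, rfl⟩ := Finset.mem_image.mp hj
          have hi0 : i ≠ 0 := Finset.ne_of_mem_erase hi
          have : i < t + 1 := hα i (Finset.mem_of_mem_erase hi)
          omega
        by_cases h0 : 0 ∈ α
        · have hα' : α = insert 0 β := by rw [hβ, Finset.insert_erase h0]
          rw [hα', Finset.sum_insert (by rw [hβ]; exact Finset.notMem_erase 0 α)]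
          rw [Nat.zero_mul, pow_zero, mul_one, h2, add_comm, hF3, ih γ hγb]
        · have hα' : β = α := by rw [hβ, Finset.erase_eq_of_notMem h0]
          rw [← hα', h2, hF2, ih γ hγb]
  -- conclusion
  refine ⟨n, fun i => c * k ^ ((v₂.length + q.length) + i * A),
    fun i => Nat.mul_pos hcpos (pow_pos h0k _), ?_⟩
  intro α hαne
  have hsum : ∑ i ∈ α, c * k ^ ((v₂.length + q.length) + i * A)
      = k ^ (v₂.length + q.length) * ∑ i ∈ α, c * k ^ (i * A) := by
    rw [Finset.mul_sum]
    refine Finset.sum_congr rfl fun i _ => ?_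
    rw [pow_add]; ring
  have hbound : ∀ i ∈ α, i < α.sup id + 1 :=
    fun i hi => Nat.lt_succ_of_le (Finset.le_sup (f := id) hi)
  have h1 : σ (∑ i ∈ α, c * k ^ (i * A)) = σ 0 := hF4 _ α hbound
  have h4 : f (k ^ (v₂.length + q.length) * (∑ i ∈ α, c * k ^ (i * A)) + n) = 1 := by
    rw [← hσ_form, h1, hF1]
  have h5 : n + ∑ i ∈ α, c * k ^ ((v₂.length + q.length) + i * A)
      = k ^ (v₂.length + q.length) * (∑ i ∈ α, c * k ^ (i * A)) + n := by
    rw [hsum]; ring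
  rw [h5]
  by_contra hmem
  rw [hf, Set.indicator_of_notMem hmem] at h4
  exact absurd h4 (by norm_num)
end

section
/- Let k ≥ 2 be an integer, let Ω be a finite set, let a : ℕ₀ → Ω be a k-automatic sequence, and let ρ : Ω → ℝ. Then the following are equivalent: (i) for every y ∈ Ω, the set {n ∈ ℕ₀ : a(n) = y} has natural density ρ(y); (ii) for every y ∈ Ω, the set {n ∈ ℕ₀ : a(n) = y} has uniform density ρ(y), i.e., |{n ∈ [M, M+N) : a(n) = y}| / N → ρ(y) as N → ∞, uniformly in M ∈ ℕ₀. -/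
/-!
For each fixed `m`, natural density gives the right frequency of `y` on the block
`[k^l m, k^l (m + 1))` as `l → ∞`, since that count is a difference of two prefix counts.
The count on the block only depends on which kernel sequences `n ↦ a (k^l n + r)` take the
value `y` at `m`; the kernel being finite, there are finitely many such patterns, so the
convergence is uniform in `m`. Any long window `[M, M + N)` is a union of aligned blocks of
length `k^l` up to two pieces of length `< k^l` at its ends, which gives uniform density.
-/

open Filter Topology

open Set

noncomputable def windowCount (s : Set ℕ) (M N : ℕ) : ℕ :=
  (s ∩ Ico M (M + N)).ncard

def HasNatDensity (s : Set ℕ) (ρ : ℝ) : Prop :=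
  Tendsto (fun N : ℕ => ((s ∩ Iio N).ncard : ℝ) / N) atTop (𝓝 ρ)

def HasUniformDensity (s : Set ℕ) (ρ : ℝ) : Prop :=
  ∀ ε : ℝ, 0 < ε → ∃ N₀ : ℕ, ∀ N : ℕ, N₀ ≤ N → ∀ M : ℕ,
    |(windowCount s M N : ℝ) / N - ρ| < ε

section WindowCount

variable (s : Set ℕ)

theorem windowCount_zero_left (N : ℕ) : windowCount s 0 N = (s ∩ Iio N).ncard := by
  rw [windowCount, zero_add]
  congr 1
  ext n
  simp

theorem windowCount_le (M N : ℕ) : windowCount s M N ≤ N := by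
  unfold windowCount
  simpa using ncard_le_ncard (inter_subset_right (s := s)) (finite_Ico M (M + N))

theorem windowCount_add (M N₁ N₂ : ℕ) :
    windowCount s M (N₁ + N₂) = windowCount s M N₁ + windowCount s (M + N₁) N₂ := by
  unfold windowCount
  rw [← ncard_union_eq, ← inter_union_distrib_left, ← add_assoc,
    Ico_union_Ico_eq_Ico (by omega) (by omega)]
  exact Ico_disjoint_Ico_same.inter_left' s |>.inter_right' s

theorem windowCount_eq_ncard_shift (M N : ℕ) :
    windowCount s M N = ({r | M + r ∈ s} ∩ Iio N).ncard := by
  rw [windowCount,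
    ← ncard_image_of_injective ({r | M + r ∈ s} ∩ Iio N) (add_right_injective M)]
  congr 1
  ext n
  simp only [mem_inter_iff, mem_Ico, mem_image, mem_ofPred_eq, mem_Iio]
  constructor
  · rintro ⟨hn, hMn, hnN⟩
    exact ⟨n - M, ⟨by rwa [Nat.add_sub_cancel' hMn], by omega⟩, by omega⟩
  · rintro ⟨r, ⟨hr, hrN⟩, rfl⟩
    exact ⟨hr, by omega, by omega⟩

theorem windowCount_congr_shift {M M' N : ℕ} (h : ∀ r < N, M + r ∈ s ↔ M' + r ∈ s) :
    windowCount s M N = windowCount s M' N := by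
  rw [windowCount_eq_ncard_shift, windowCount_eq_ncard_shift]
  congr 1
  ext r
  simp only [mem_inter_iff, mem_ofPred_eq, mem_Iio]
  exact and_congr_left (h r)

theorem windowCount_mul_eq_sum (L p d : ℕ) :
    windowCount s (L * p) (L * d) = ∑ i ∈ Finset.range d, windowCount s (L * (p + i)) L := by
  induction d with
  | zero => simp [windowCount]
  | succ d ih =>
    rw [Finset.sum_range_succ, ← ih, mul_add, mul_add, mul_one, windowCount_add, ← mul_add]

end WindowCount

theorem HasUniformDensity.hasNatDensity {s : Set ℕ} {ρ : ℝ} (h : HasUniformDensity s ρ) :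
    HasNatDensity s ρ := by
  refine Metric.tendsto_atTop.2 fun ε hε => ?_
  obtain ⟨N₀, hN₀⟩ := h ε hε
  exact ⟨N₀, fun N hN => by simpa [Real.dist_eq, windowCount_zero_left] using hN₀ N hN 0⟩

theorem HasNatDensity.tendsto_windowCount_div {s : Set ℕ} {ρ : ℝ} (h : HasNatDensity s ρ)
    {ι : Type*} {F : Filter ι} {L : ι → ℕ} (hL : Tendsto L F atTop) (m : ℕ) :
    Tendsto (fun i => (windowCount s (L i * m) (L i) : ℝ) / (L i : ℕ)) F (𝓝 ρ) := by
  have hprefix (c : ℕ) :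
      Tendsto (fun i => ((s ∩ Iio (c * L i)).ncard : ℝ) / (L i : ℕ)) F (𝓝 (c * ρ)) := by
    rcases c.eq_zero_or_pos with rfl | hc
    · simpa using tendsto_const_nhds
    refine ((h.comp (tendsto_atTop_mono (fun i => Nat.le_mul_of_pos_left (L i) hc) hL)).const_mul
      (c : ℝ)).congr' ((hL.eventually_gt_atTop 0).mono fun i hi => ?_)
    have : (L i : ℝ) ≠ 0 := by positivity
    simp only [Function.comp_apply, Nat.cast_mul]
    field_simp
  have hsplit (i : ι) : (windowCount s (L i * m) (L i) : ℝ) / (L i : ℕ) =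
      ((s ∩ Iio ((m + 1) * L i)).ncard : ℝ) / (L i : ℕ) -
        ((s ∩ Iio (m * L i)).ncard : ℝ) / (L i : ℕ) := by
    have := windowCount_add s 0 (L i * m) (L i)
    rw [windowCount_zero_left, windowCount_zero_left, zero_add] at this
    rw [← sub_div, add_mul, one_mul, mul_comm m, this]
    push_cast
    ring
  simpa [hsplit, add_mul] using (hprefix (m + 1)).sub (hprefix m)

theorem windowCount_mul_abs_sub_le {s : Set ℕ} {L : ℕ} {ρ δ : ℝ}
    (hblock : ∀ m, |(windowCount s (L * m) L : ℝ) - ρ * L| ≤ δ * L) (p d : ℕ) :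
    |(windowCount s (L * p) (L * d) : ℝ) - ρ * (L * d)| ≤ δ * (L * d) := by
  calc |(windowCount s (L * p) (L * d) : ℝ) - ρ * (L * d)|
      = |∑ i ∈ Finset.range d, ((windowCount s (L * (p + i)) L : ℝ) - ρ * L)| := by
        rw [windowCount_mul_eq_sum, Finset.sum_sub_distrib]
        simp only [Nat.cast_sum, Finset.sum_const, Finset.card_range, nsmul_eq_mul]
        ring_nf
    _ ≤ ∑ i ∈ Finset.range d, |(windowCount s (L * (p + i)) L : ℝ) - ρ * L| :=
        Finset.abs_sum_le_sum_abs _ _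
    _ ≤ ∑ _i ∈ Finset.range d, δ * L := Finset.sum_le_sum fun i _ => hblock (p + i)
    _ = δ * (L * d) := by simp only [Finset.sum_const, Finset.card_range, nsmul_eq_mul]; ring

theorem windowCount_abs_sub_le {s : Set ℕ} {L : ℕ} (hL : 0 < L) {ρ δ : ℝ}
    (hblock : ∀ m, |(windowCount s (L * m) L : ℝ) - ρ * L| ≤ δ * L) (M N : ℕ) :
    |(windowCount s M N : ℝ) - ρ * N| ≤ δ * N + (1 + δ + |ρ|) * L := by
  obtain ⟨p, r, hr, rfl⟩ : ∃ p r, r < L ∧ M = L * p + r :=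
    ⟨M / L, M % L, Nat.mod_lt M hL, (Nat.div_add_mod M L).symm⟩
  obtain ⟨q, t, ht, hrN⟩ : ∃ q t, t < L ∧ r + N = L * q + t :=
    ⟨(r + N) / L, (r + N) % L, Nat.mod_lt _ hL, (Nat.div_add_mod _ L).symm⟩
  -- `[L p, M + N)` is `r` points then the window, and also `q` blocks then `t` points.
  have hsplit := (windowCount_add s (L * p) r N).symm.trans <|
    (congrArg _ hrN).trans (windowCount_add s (L * p) (L * q) t)
  have hcast : ((windowCount s (L * p) r : ℕ) : ℝ) + windowCount s (L * p + r) N =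
      windowCount s (L * p) (L * q) + windowCount s (L * p + L * q) t := by exact_mod_cast hsplit
  have hrN' : (r : ℝ) + N = L * q + t := by exact_mod_cast hrN
  have hr' : (r : ℝ) ≤ L := by exact_mod_cast hr.le
  have ht' : (t : ℝ) ≤ L := by exact_mod_cast ht.le
  have hends : |(windowCount s (L * p + L * q) t : ℝ) - windowCount s (L * p) r| ≤ L :=
    abs_sub_le_of_nonneg_of_le (by positivity)
      (by exact_mod_cast (windowCount_le s _ t).trans ht.le) (by positivity)
      (by exact_mod_cast (windowCount_le s _ r).trans hr.le)
  have hρ : |ρ * (r - t)| ≤ |ρ| * L := by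
    rw [abs_mul]
    gcongr
    exact abs_sub_le_of_nonneg_of_le (by positivity) hr' (by positivity) ht'
  have hδ : 0 ≤ δ := nonneg_of_mul_nonneg_left ((abs_nonneg _).trans (hblock 0)) (by positivity)
  have hLq : δ * (L * q) ≤ δ * (N + L) := by gcongr; linarith [t.cast_nonneg (α := ℝ)]
  calc |(windowCount s (L * p + r) N : ℝ) - ρ * N|
      = |((windowCount s (L * p) (L * q) : ℝ) - ρ * (L * q)) +
          ((windowCount s (L * p + L * q) t : ℝ) - windowCount s (L * p) r) + ρ * (r - t)| := by
        congr 1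
        linear_combination hcast - ρ * hrN'
    _ ≤ δ * (L * q) + L + |ρ| * L :=
        (abs_add_three _ _ _).trans (by gcongr; exact windowCount_mul_abs_sub_le hblock p q)
    _ ≤ δ * N + (1 + δ + |ρ|) * L := by linarith

theorem HasUniformDensity.of_blocks {s : Set ℕ} {ρ : ℝ}
    (h : ∀ δ > 0, ∃ L > 0, ∀ m, |(windowCount s (L * m) L : ℝ) / L - ρ| < δ) :
    HasUniformDensity s ρ := by
  intro ε hε
  obtain ⟨L, hL, hblock⟩ := h (ε / 2) (by positivity)
  have hL' : (0 : ℝ) < L := by exact_mod_cast hL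
  have hblock' (m : ℕ) : |(windowCount s (L * m) L : ℝ) - ρ * L| ≤ ε / 2 * L := by
    have := hblock m
    rw [div_sub' hL'.ne', abs_div, abs_of_pos hL', div_lt_iff₀ hL', mul_comm (L : ℝ) ρ] at this
    exact this.le
  obtain ⟨N₀, hN₀⟩ := exists_nat_gt ((1 + ε / 2 + |ρ|) * L / (ε / 2))
  refine ⟨N₀, fun N hN M => ?_⟩
  have hN' : (1 + ε / 2 + |ρ|) * L / (ε / 2) < N := hN₀.trans_le (by exact_mod_cast hN)
  have hNpos : (0 : ℝ) < N := lt_of_le_of_lt (by positivity) hN'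
  rw [div_lt_iff₀ (by positivity)] at hN'
  rw [div_sub' hNpos.ne', abs_div, abs_of_pos hNpos, div_lt_iff₀ hNpos, mul_comm (N : ℝ) ρ]
  have := windowCount_abs_sub_le hL hblock' M N
  linarith

theorem Filter.eventually_forall_of_finite_range {ι α β : Type*} {F : Filter ι}
    {P : ι → α → Prop} (π : α → β) (hπ : (range π).Finite)
    (hP : ∀ i a a', π a = π a' → P i a → P i a') (h : ∀ a, ∀ᶠ i in F, P i a) :
    ∀ᶠ i in F, ∀ a, P i a := by
  have hrep : ∀ b ∈ range π, ∀ᶠ i in F, ∃ a, π a = b ∧ P i a := by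
    rintro _ ⟨a, rfl⟩
    exact (h a).mono fun i hi => ⟨a, rfl, hi⟩
  filter_upwards [(eventually_all_finite hπ).2 hrep] with i hi a
  obtain ⟨a₀, ha₀, hPa₀⟩ := hi (π a) ⟨a, rfl⟩
  exact hP i a₀ a ha₀ hPa₀

theorem windowCount_fiber_eq_of_kKernel {Ω : Type*} {k : ℕ} {a : ℕ → Ω} {y : Ω}
    {m m' : ℕ} (h : ∀ g ∈ kKernel k a, g m = y ↔ g m' = y) (l : ℕ) :
    windowCount {n | a n = y} (k ^ l * m) (k ^ l) =
      windowCount {n | a n = y} (k ^ l * m') (k ^ l) :=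
  windowCount_congr_shift _ fun r hr => h _ ⟨l, r, hr, rfl⟩

theorem IsKAutomatic.eventually_forall_abs_windowCount_pow_div_sub_lt {Ω : Type*} {k : ℕ}
    (hk : 1 < k) {a : ℕ → Ω} (ha : IsKAutomatic k a) {y : Ω} {ρ : ℝ}
    (h : HasNatDensity {n | a n = y} ρ) {δ : ℝ} (hδ : 0 < δ) :
    ∀ᶠ l in atTop, ∀ m,
      |(windowCount {n | a n = y} (k ^ l * m) (k ^ l) : ℝ) / (k ^ l : ℕ) - ρ| < δ := by
  refine eventually_forall_of_finite_range (fun m => {g ∈ kKernel k a | g m = y})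
    (ha.powerset.subset (range_subset_iff.2 fun m => sep_subset _ _)) ?_ fun m => ?_
  · intro l m m' hm hfreq
    rwa [← windowCount_fiber_eq_of_kKernel fun g hg => by simpa [hg] using Set.ext_iff.1 hm g]
  · have := h.tendsto_windowCount_div (tendsto_pow_atTop_atTop_of_one_lt hk) m
    exact (Metric.tendsto_nhds.1 this δ hδ).mono fun l hl => by rwa [Real.dist_eq] at hl

theorem IsKAutomatic.hasUniformDensity {Ω : Type*} {k : ℕ} (hk : 1 < k) {a : ℕ → Ω}
    (ha : IsKAutomatic k a) {y : Ω} {ρ : ℝ} (h : HasNatDensity {n | a n = y} ρ) :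
    HasUniformDensity {n | a n = y} ρ :=
  HasUniformDensity.of_blocks fun δ hδ =>
    have ⟨l, hl⟩ := (ha.eventually_forall_abs_windowCount_pow_div_sub_lt hk h hδ).exists
    ⟨k ^ l, by positivity, hl⟩

theorem stmt_14_general {Ω : Type*} (k : ℕ) (hk : 2 ≤ k) (a : ℕ → Ω)
    (ha : IsKAutomatic k a) (ρ : Ω → ℝ) :
    (∀ y : Ω, Filter.Tendsto
        (fun N : ℕ => (({n : ℕ | a n = y} ∩ Set.Iio N).ncard : ℝ) / N)
        Filter.atTop (nhds (ρ y))) ↔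
    (∀ y : Ω, ∀ ε : ℝ, 0 < ε → ∃ N₀ : ℕ, ∀ N : ℕ, N₀ ≤ N → ∀ M : ℕ,
        |(({n : ℕ | a n = y} ∩ Set.Ico M (M + N)).ncard : ℝ) / N - ρ y| < ε) :=
  forall_congr' fun _ => ⟨ha.hasUniformDensity hk, HasUniformDensity.hasNatDensity⟩

/-- For a `k`-automatic sequence `a : ℕ → Ω` (`Ω` finite) and
`ρ : Ω → ℝ`, each fibre `{n : a n = y}` has natural density `ρ y` iff each fibre has
uniform density `ρ y`. -/
theorem stmt_14 {Ω : Type*} [Finite Ω] (k : ℕ) (hk : 2 ≤ k) (a : ℕ → Ω)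
    (ha : IsKAutomatic k a) (ρ : Ω → ℝ) :
    (∀ y : Ω, Filter.Tendsto
        (fun N : ℕ => (({n : ℕ | a n = y} ∩ Set.Iio N).ncard : ℝ) / N)
        Filter.atTop (nhds (ρ y))) ↔
    (∀ y : Ω, ∀ ε : ℝ, 0 < ε → ∃ N₀ : ℕ, ∀ N : ℕ, N₀ ≤ N → ∀ M : ℕ,
        |(({n : ℕ | a n = y} ∩ Set.Ico M (M + N)).ncard : ℝ) / N - ρ y| < ε) :=
  stmt_14_general k hk a ha ρ
end
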